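/- For every matrix A ∈ ℝ^{n×n}, μ(A) ≤ μ(M(A)), i.e. the maximal real part of the complex eigenvalues of A is at most the maximal real part of the complex eigenvalues of the associated Metzler matrix M(A). -/

import Mathlib

noncomputable section

/-- `μ(A)`: the maximal real part of the complex eigenvalues of a real square matrix `A`. -/
def muMax {n : ℕ} (A : Matrix (Fin n) (Fin n) ℝ) : ℝ :=
  sSup (Complex.re '' spectrum ℂ (A.map (algebraMap ℝ ℂ)))

/-- The Metzler matrix `M(A)` associated with `A`: same diagonal as `A`,
off-diagonal entries `|a_{ij}|`. -/
def metz {n : ℕ} (A : Matrix (Fin n) (Fin n) ℝ) : Matrix (Fin n) (Fin n) ℝ :=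
  Matrix.of fun i j => if i = j then A i j else |A i j|

/-!
For `c ≥ max_i (-a_{ii})` the nonnegative matrix `M(A) + cI` dominates `A + cI` entrywise, hence
so do all their powers, and Gelfand's formula gives `ρ(A + cI) ≤ ρ(M(A) + cI)`. So for every
eigenvalue `z` of `A` there is an eigenvalue `ν` of `M(A)` with `|z + c| ≤ |ν + c|`. As `c → ∞`,
`|z + c| - c → Re z`, while `|ν + c| - c ≤ μ(M(A)) + O(1/c)` uniformly in `ν`, because the
spectrum of `M(A)` is bounded.
-/

open Filter

namespace Matrix

variable {ι : Type*} [Fintype ι]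

theorem norm_pow_apply_le [DecidableEq ι] {R : Type*} [SeminormedRing R] [NormOneClass R]
    {B : Matrix ι ι R} {C : Matrix ι ι ℝ} (h : ∀ i j, ‖B i j‖ ≤ C i j) (k : ℕ) (i j : ι) :
    ‖(B ^ k) i j‖ ≤ (C ^ k) i j := by
  induction k generalizing j with
  | zero => by_cases hij : i = j <;> simp [hij]
  | succ k ih =>
    rw [pow_succ, pow_succ, mul_apply, mul_apply]
    refine (norm_sum_le _ _).trans (Finset.sum_le_sum fun l _ => ?_)
    exact (norm_mul_le _ _).trans
      (mul_le_mul (ih l) (h l j) (norm_nonneg _) ((norm_nonneg _).trans (ih l)))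

attribute [local instance] Matrix.linftyOpSeminormedAddCommGroup in
theorem linfty_opNorm_le_of_norm_apply_le {R S : Type*} [SeminormedAddCommGroup R]
    [SeminormedAddCommGroup S] {B : Matrix ι ι R} {C : Matrix ι ι S}
    (h : ∀ i j, ‖B i j‖ ≤ ‖C i j‖) : ‖B‖ ≤ ‖C‖ := by
  rw [linfty_opNorm_def, linfty_opNorm_def, NNReal.coe_le_coe]
  exact Finset.sup_mono_fun fun i _ => Finset.sum_le_sum fun j _ => h i j

section Spectrum

variable [DecidableEq ι]

-- The spectrum does not depend on a norm; any submultiplicative one makes the Banach-algebra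
-- results available for complex matrices.
attribute [local instance] Matrix.linftyOpNormedRing Matrix.linftyOpNormedAlgebra

theorem isBounded_spectrum (M : Matrix ι ι ℂ) : Bornology.IsBounded (spectrum ℂ M) :=
  spectrum.isBounded M

theorem spectrum_nonempty [Nonempty ι] (M : Matrix ι ι ℂ) : (spectrum ℂ M).Nonempty :=
  spectrum.nonempty M

theorem exists_mem_spectrum_nnnorm_eq_spectralRadius [Nonempty ι] (M : Matrix ι ι ℂ) :
    ∃ z ∈ spectrum ℂ M, (‖z‖₊ : ENNReal) = spectralRadius ℂ M :=
  spectrum.exists_nnnorm_eq_spectralRadius M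

theorem spectralRadius_le_of_norm_apply_le {B : Matrix ι ι ℂ} {C : Matrix ι ι ℝ}
    (h : ∀ i j, ‖B i j‖ ≤ C i j) :
    spectralRadius ℂ B ≤ spectralRadius ℂ (C.map (algebraMap ℝ ℂ)) := by
  refine le_of_tendsto_of_tendsto'
    (spectrum.pow_norm_pow_one_div_tendsto_nhds_spectralRadius B)
    (spectrum.pow_norm_pow_one_div_tendsto_nhds_spectralRadius _) fun k => ?_
  gcongr
  refine linfty_opNorm_le_of_norm_apply_le fun i j => ?_
  rw [← Matrix.map_pow, map_apply, Complex.coe_algebraMap, Complex.norm_real, Real.norm_eq_abs]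
  exact (norm_pow_apply_le h k i j).trans (le_abs_self _)

end Spectrum

end Matrix

open Matrix

theorem Complex.re_le_of_eventually_norm_add_le {S : Set ℂ} {z : ℂ} {t R : ℝ}
    (hR : ∀ ν ∈ S, ‖ν‖ ≤ R) (ht : ∀ ν ∈ S, ν.re ≤ t)
    (h : ∀ᶠ c : ℝ in atTop, ∃ ν ∈ S, ‖z + c‖ ≤ ‖ν + c‖) : z.re ≤ t := by
  by_contra! hzt
  -- Once `t + c ≥ R² / (2 (Re z - t))`, the chain `(Re z + c)² ≤ |ν + c|² ≤ (t + c)² + R²` fails.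
  obtain ⟨c, ⟨ν, hν, hle⟩, hc⟩ :=
    (h.and (eventually_ge_atTop (max R (R ^ 2 / (2 * (z.re - t)) - t)))).exists
  have hνR := hR ν hν
  have hνt := ht ν hν
  have hz : (z.re + c) ^ 2 ≤ ‖z + c‖ ^ 2 := by
    have := Complex.abs_re_le_norm (z + c)
    rw [Complex.add_re, Complex.ofReal_re] at this
    exact sq_le_sq.2 (this.trans (le_abs_self _))
  have hνc : ‖ν + c‖ ^ 2 = (ν.re + c) ^ 2 + ν.im ^ 2 := by
    rw [Complex.sq_norm, Complex.normSq_apply]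
    simp only [Complex.add_re, Complex.add_im, Complex.ofReal_re, Complex.ofReal_im, add_zero]
    ring
  have hνre : 0 ≤ ν.re + c := by
    linarith [neg_abs_le ν.re, (Complex.abs_re_le_norm ν).trans hνR,
      le_max_left R (R ^ 2 / (2 * (z.re - t)) - t)]
  have hνim : ν.im ^ 2 ≤ R ^ 2 := by
    rw [← sq_abs]
    exact pow_le_pow_left₀ (abs_nonneg _) ((Complex.abs_im_le_norm ν).trans hνR) 2
  have hct : R ^ 2 ≤ 2 * (z.re - t) * (t + c) := by
    rw [← div_le_iff₀' (by linarith)]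
    linarith [le_max_right R (R ^ 2 / (2 * (z.re - t)) - t)]
  have := pow_le_pow_left₀ (norm_nonneg _) hle 2
  nlinarith

theorem norm_map_add_algebraMap_apply_le_metz {n : ℕ} (A : Matrix (Fin n) (Fin n) ℝ) {c : ℝ}
    (hc : ∀ i, -A i i ≤ c) (i j : Fin n) :
    ‖(A.map (algebraMap ℝ ℂ) + algebraMap ℂ (Matrix (Fin n) (Fin n) ℂ) c) i j‖ ≤
      (metz A + algebraMap ℝ (Matrix (Fin n) (Fin n) ℝ) c) i j := by
  by_cases hij : i = j
  · subst hij
    simp only [Complex.coe_algebraMap, Matrix.add_apply, map_apply, algebraMap_matrix_apply,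
      ↓reduceIte, Algebra.algebraMap_self, RingHom.id_apply, metz, of_apply, Real.ringHom_apply]
    rw [← Complex.ofReal_add, Complex.norm_real, Real.norm_of_nonneg (by linarith [hc i])]
  · simp [metz, hij, algebraMap_matrix_apply]

theorem exists_mem_spectrum_metz_norm_add_le {n : ℕ} [Nonempty (Fin n)]
    (A : Matrix (Fin n) (Fin n) ℝ) {z : ℂ} (hz : z ∈ spectrum ℂ (A.map (algebraMap ℝ ℂ)))
    {c : ℝ} (hc : ∀ i, -A i i ≤ c) :
    ∃ ν ∈ spectrum ℂ ((metz A).map (algebraMap ℝ ℂ)), ‖z + c‖ ≤ ‖ν + c‖ := by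
  set B := A.map (algebraMap ℝ ℂ) + algebraMap ℂ (Matrix (Fin n) (Fin n) ℂ) c
  set C := metz A + algebraMap ℝ (Matrix (Fin n) (Fin n) ℝ) c
  have hC : C.map (algebraMap ℝ ℂ) =
      (metz A).map (algebraMap ℝ ℂ) + algebraMap ℂ (Matrix (Fin n) (Fin n) ℂ) c := by
    ext i j
    by_cases hij : i = j <;> simp [C, hij, algebraMap_matrix_apply]
  have hzB : z + c ∈ spectrum ℂ B := by
    rw [← spectrum.add_singleton_eq]
    exact Set.add_mem_add hz rfl
  obtain ⟨μ, hμ, hμρ⟩ := exists_mem_spectrum_nnnorm_eq_spectralRadius (C.map (algebraMap ℝ ℂ))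
  rw [hC, ← spectrum.add_singleton_eq] at hμ
  obtain ⟨ν, hν, _, rfl, rfl⟩ := hμ
  refine ⟨ν, hν, ?_⟩
  have : (‖z + c‖₊ : ENNReal) ≤ ‖ν + c‖₊ :=
    calc (‖z + c‖₊ : ENNReal)
        ≤ spectralRadius ℂ B := le_iSup₂ (f := fun x _ => (‖x‖₊ : ENNReal)) _ hzB
      _ ≤ spectralRadius ℂ (C.map (algebraMap ℝ ℂ)) :=
          spectralRadius_le_of_norm_apply_le (norm_map_add_algebraMap_apply_le_metz A hc)
      _ = ‖ν + c‖₊ := hμρ.symm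
  exact_mod_cast this

theorem muMax_le_muMax_metz {n : ℕ} (A : Matrix (Fin n) (Fin n) ℝ) :
    muMax A ≤ muMax (metz A) := by
  rcases isEmpty_or_nonempty (Fin n) with hn | hn
  · exact (congrArg muMax (Subsingleton.elim A (metz A))).le
  set M := (metz A).map (algebraMap ℝ ℂ)
  obtain ⟨R, hR⟩ := (isBounded_spectrum M).exists_norm_le
  have hbdd : BddAbove (Complex.re '' spectrum ℂ M) :=
    ⟨R, Set.forall_mem_image.2 fun ν hν => (Complex.re_le_norm ν).trans (hR ν hν)⟩
  refine csSup_le ((spectrum_nonempty _).image _) (Set.forall_mem_image.2 fun z hz => ?_)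
  refine Complex.re_le_of_eventually_norm_add_le hR (fun ν hν => le_csSup hbdd ⟨ν, hν, rfl⟩) ?_
  filter_upwards [eventually_all.2 fun i => eventually_ge_atTop (-A i i)] with c hc
  exact exists_mem_spectrum_metz_norm_add_le A hz hc

end
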